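/- arXiv:1305.1433 — 3 statements merged into one kernel-verified Lean document; each statement's English description precedes it below -/
import Mathlib

section
/- Let (𝒰,𝒱) be a cotorsion pair on an exact category 𝓑 with enough projectives and injectives. Given a reflection sequence B ↣ Z ↠ U for B (so U ∈ 𝒰, Z ∈ 𝓑⁺, and there is a commutative diagram from a projective presentation ΩU ↣ P ↠ U to B ↣ Z ↠ U whose left vertical map x : ΩU → B factors through 𝒰), the objects Z and B⁺ are isomorphic in the quotient category 𝓑/𝒲. -/
open CategoryTheory Limits ZeroObject

universe v u

variable (C : Type u) [Category.{v} C] [Preadditive C] [HasZeroObject C]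
  [HasBinaryBiproducts C]

/-- An exact structure (in the sense of Quillen) on an additive category,
given by a class of short exact sequences (conflations). -/
structure ExactStructure : Type (max u (v + 1)) where
  /-- the class of short exact sequences -/
  IsSES : ∀ {A B X : C}, (A ⟶ B) → (B ⟶ X) → Prop
  comp_zero : ∀ {A B X : C} {f : A ⟶ B} {g : B ⟶ X}, IsSES f g → f ≫ g = 0
  isKernel : ∀ {A B X : C} {f : A ⟶ B} {g : B ⟶ X} (h : IsSES f g),
      Nonempty (IsLimit (KernelFork.ofι f (comp_zero h)))
  isCokernel : ∀ {A B X : C} {f : A ⟶ B} {g : B ⟶ X} (h : IsSES f g),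
      Nonempty (IsColimit (CokernelCofork.ofπ g (comp_zero h)))
  ses_iso_congr : ∀ {A B X A' B' X' : C} {f : A ⟶ B} {g : B ⟶ X}
      (eA : A' ≅ A) (eB : B ≅ B') (eX : X ≅ X'), IsSES f g →
      IsSES (eA.hom ≫ f ≫ eB.hom) (eB.inv ≫ g ≫ eX.hom)
  id_ses : ∀ A : C, IsSES (𝟙 A) (0 : A ⟶ 0)
  id_ses' : ∀ A : C, IsSES (0 : (0 : C) ⟶ A) (𝟙 A)
  infl_comp : ∀ {A B X : C} (f : A ⟶ B) (f' : B ⟶ X),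
      (∃ (Z : C) (g : B ⟶ Z), IsSES f g) → (∃ (Z : C) (g : X ⟶ Z), IsSES f' g) →
      ∃ (Z : C) (g : X ⟶ Z), IsSES (f ≫ f') g
  defl_comp : ∀ {A B X : C} (g : A ⟶ B) (g' : B ⟶ X),
      (∃ (Z : C) (f : Z ⟶ A), IsSES f g) → (∃ (Z : C) (f : Z ⟶ B), IsSES f g') →
      ∃ (Z : C) (f : Z ⟶ A), IsSES f (g ≫ g')
  pushout_infl : ∀ {A B A' : C} (f : A ⟶ B) (a : A ⟶ A'),
      (∃ (Z : C) (g : B ⟶ Z), IsSES f g) →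
      ∃ (P : C) (f' : A' ⟶ P) (b : B ⟶ P), IsPushout a f f' b ∧
        ∃ (Z : C) (g : P ⟶ Z), IsSES f' g
  pullback_defl : ∀ {B X X' : C} (g : B ⟶ X) (x : X' ⟶ X),
      (∃ (Z : C) (f : Z ⟶ B), IsSES f g) →
      ∃ (P : C) (g' : P ⟶ X') (b : P ⟶ B), IsPullback g' b x g ∧
        ∃ (Z : C) (f : Z ⟶ P), IsSES f g'

variable {C}

namespace ExactStructure

variable (E : ExactStructure C)

/-- inflations (admissible monomorphisms) -/
def Infl {A B : C} (f : A ⟶ B) : Prop := ∃ (X : C) (g : B ⟶ X), E.IsSES f g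

/-- deflations (admissible epimorphisms) -/
def Defl {B X : C} (g : B ⟶ X) : Prop := ∃ (A : C) (f : A ⟶ B), E.IsSES f g

/-- projective objects relative to the exact structure -/
def Proj (P : C) : Prop :=
  ∀ ⦃B X : C⦄ (g : B ⟶ X), E.Defl g → ∀ h : P ⟶ X, ∃ l : P ⟶ B, l ≫ g = h

/-- injective objects relative to the exact structure -/
def Inj (I : C) : Prop :=
  ∀ ⦃A B : C⦄ (f : A ⟶ B), E.Infl f → ∀ h : A ⟶ I, ∃ l : B ⟶ I, f ≫ l = h

/-- the exact category has enough projectives -/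
def EnoughProj : Prop :=
  ∀ X : C, ∃ (P K : C) (i : K ⟶ P) (p : P ⟶ X), E.Proj P ∧ E.IsSES i p

/-- the exact category has enough injectives -/
def EnoughInj : Prop :=
  ∀ X : C, ∃ (I Z : C) (i : X ⟶ I) (p : I ⟶ Z), E.Inj I ∧ E.IsSES i p

end ExactStructure

/-- a morphism factors through an object of a given class of objects -/
def FactorsThru (S : Set C) {X Y : C} (f : X ⟶ Y) : Prop :=
  ∃ (W : C) (a : X ⟶ W) (b : W ⟶ Y), W ∈ S ∧ a ≫ b = f

/-- A cotorsion pair `(𝒰, 𝒱)` on the exact category `(C, E)`. -/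
structure CotorsionPair (E : ExactStructure C) where
  U : Set C
  V : Set C
  U_summand : ∀ ⦃X Z : C⦄, Z ∈ U → (∃ (i : X ⟶ Z) (r : Z ⟶ X), i ≫ r = 𝟙 X) → X ∈ U
  V_summand : ∀ ⦃X Z : C⦄, Z ∈ V → (∃ (i : X ⟶ Z) (r : Z ⟶ X), i ≫ r = 𝟙 X) → X ∈ V
  U_add : ∀ ⦃X Y : C⦄, X ∈ U → Y ∈ U → (X ⊞ Y) ∈ U
  V_add : ∀ ⦃X Y : C⦄, X ∈ V → Y ∈ V → (X ⊞ Y) ∈ V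
  ext_vanish : ∀ ⦃A B X : C⦄ {f : A ⟶ B} {g : B ⟶ X}, E.IsSES f g → X ∈ U → A ∈ V →
      ∃ r : B ⟶ A, f ≫ r = 𝟙 A
  res : ∀ B : C, ∃ (VB UB : C) (i : VB ⟶ UB) (p : UB ⟶ B),
      VB ∈ V ∧ UB ∈ U ∧ E.IsSES i p
  cores : ∀ B : C, ∃ (VB UB : C) (i : B ⟶ VB) (p : VB ⟶ UB),
      VB ∈ V ∧ UB ∈ U ∧ E.IsSES i p

namespace CotorsionPair

variable {E : ExactStructure C} (CP : CotorsionPair E)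

/-- `𝒲 = 𝒰 ∩ 𝒱` -/
def W : Set C := CP.U ∩ CP.V

/-- `𝓑⁺`: objects admitting a short exact sequence `V ↣ W ↠ B` with `V ∈ 𝒱`, `W ∈ 𝒲`. -/
def Bplus : Set C :=
  {B | ∃ (V₀ W₀ : C) (i : V₀ ⟶ W₀) (p : W₀ ⟶ B), V₀ ∈ CP.V ∧ W₀ ∈ CP.W ∧ E.IsSES i p}

/-- `𝓑⁻`: objects admitting a short exact sequence `B ↣ W ↠ U` with `W ∈ 𝒲`, `U ∈ 𝒰`. -/
def Bminus : Set C :=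
  {B | ∃ (W₀ U₀ : C) (i : B ⟶ W₀) (p : W₀ ⟶ U₀), W₀ ∈ CP.W ∧ U₀ ∈ CP.U ∧ E.IsSES i p}

/-- the heart subcategory `𝓗 = 𝓑⁺ ∩ 𝓑⁻` -/
def Heart : Set C := CP.Bplus ∩ CP.Bminus

/-- the ideal relation defining the additive quotient `𝓑/𝒲` -/
def wRel : HomRel C := fun {X Y} f g =>
  ∃ (W : C) (a : X ⟶ W) (b : W ⟶ Y), W ∈ CP.W ∧ a ≫ b = f - g

/-- the quotient category `𝓑/𝒲` -/
abbrev QW := CategoryTheory.Quotient CP.wRel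

/-- the quotient functor `π : 𝓑 → 𝓑/𝒲` -/
abbrev qf : C ⥤ CP.QW := Quotient.functor _

/-- `𝓑⁺/𝒲` as a full subcategory of `𝓑/𝒲` -/
abbrev BplusCat := ObjectProperty.FullSubcategory (fun X : CP.QW => X.as ∈ CP.Bplus)

/-- `𝓑⁻/𝒲` as a full subcategory of `𝓑/𝒲` -/
abbrev BminusCat := ObjectProperty.FullSubcategory (fun X : CP.QW => X.as ∈ CP.Bminus)

/-- the heart `𝓗/𝒲` as a full subcategory of `𝓑/𝒲` -/
abbrev HeartCat := ObjectProperty.FullSubcategory (fun X : CP.QW => X.as ∈ CP.Heart)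

/-- the inclusion `𝓑⁺/𝒲 ↪ 𝓑/𝒲` -/
abbrev inclPlus : CP.BplusCat ⥤ CP.QW := ObjectProperty.ι _

/-- the inclusion `𝓑⁻/𝒲 ↪ 𝓑/𝒲` -/
abbrev inclMinus : CP.BminusCat ⥤ CP.QW := ObjectProperty.ι _

/-- the inclusion `𝓗/𝒲 ↪ 𝓑/𝒲` -/
abbrev inclHeart : CP.HeartCat ⥤ CP.QW := ObjectProperty.ι _

/-- `add(𝒰 ∗ 𝒱)`: objects `X` admitting a short exact sequence `U ↣ X ⊕ Y ↠ V`
with `U ∈ 𝒰`, `V ∈ 𝒱`. -/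
def addUV : Set C :=
  {X | ∃ (Y U₀ V₀ : C) (i : U₀ ⟶ X ⊞ Y) (p : X ⊞ Y ⟶ V₀),
    U₀ ∈ CP.U ∧ V₀ ∈ CP.V ∧ E.IsSES i p}

end CotorsionPair

/-!
Both `α_B : B ↣ B⁺` and `z : B ↣ Z` are inflations with cokernel in `𝒰` into objects of `𝓑⁺`,
and each extends along the other; composites of such extensions differ from the identity by a
map vanishing on `B`, which factors through the cokernel in `𝒰` and hence, by `Ext¹(𝒰, 𝒱) = 0`,
through the `𝒲`-cover `W₀ ↠ Y` of the target. `α_B` extends to any object of `𝓑⁺` by the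
pushout property of `B⁺`. To extend `α_B` along `z`, push `z` out along `α_B`: the resulting
conflation `B⁺ ↣ R ↠ U` is also the push-out of `ΩU ↣ P` along `x ≫ α_B`, and it splits because
`x ≫ α_B` extends along `ΩU ↣ P`, `x` factoring through `𝒰`.
-/

namespace ExactStructure

variable {E : ExactStructure C}

lemma IsSES.mono {A B X : C} {f : A ⟶ B} {g : B ⟶ X} (h : E.IsSES f g) : Mono f := by
  obtain ⟨hl⟩ := E.isKernel h
  exact ⟨fun a b hab => Fork.IsLimit.hom_ext hl (by simpa using hab)⟩

lemma IsSES.epi {A B X : C} {f : A ⟶ B} {g : B ⟶ X} (h : E.IsSES f g) : Epi g := by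
  obtain ⟨hc⟩ := E.isCokernel h
  exact ⟨fun a b hab => Cofork.IsColimit.hom_ext hc (by simpa using hab)⟩

lemma IsSES.lift {A B X : C} {f : A ⟶ B} {g : B ⟶ X} (h : E.IsSES f g)
    {T : C} (t : T ⟶ B) (ht : t ≫ g = 0) : ∃ s : T ⟶ A, s ≫ f = t := by
  obtain ⟨hl⟩ := E.isKernel h
  exact ⟨_, (KernelFork.IsLimit.lift' hl t ht).2⟩

lemma IsSES.desc {A B X : C} {f : A ⟶ B} {g : B ⟶ X} (h : E.IsSES f g)
    {T : C} (t : B ⟶ T) (ht : f ≫ t = 0) : ∃ s : X ⟶ T, g ≫ s = t := by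
  obtain ⟨hc⟩ := E.isCokernel h
  exact ⟨_, (CokernelCofork.IsColimit.desc' hc t ht).2⟩

lemma IsSES.of_epi_of_comp_eq {A B X X' : C} {f : A ⟶ B} {g : B ⟶ X} (h : E.IsSES f g)
    {g' : B ⟶ X'} [Epi g'] {e : X ⟶ X'} {e' : X' ⟶ X} (he : g ≫ e = g') (he' : g' ≫ e' = g) :
    E.IsSES f g' := by
  have := h.epi
  have hee' : e ≫ e' = 𝟙 X := by rw [← cancel_epi g, reassoc_of% he, he', Category.comp_id]
  have he'e : e' ≫ e = 𝟙 X' := by rw [← cancel_epi g', reassoc_of% he', he, Category.comp_id]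
  simpa [he] using E.ses_iso_congr (Iso.refl A) (Iso.refl B) ⟨e, e', hee', he'e⟩ h

lemma isSES_comp_of_isPushout {V U B W P : C} {v : V ⟶ U} {u : U ⟶ B} {w : U ⟶ W}
    {α : B ⟶ P} {w' : W ⟶ P} (h : E.IsSES v u) (hw : E.Infl w) (hpo : IsPushout u w α w') :
    E.IsSES (v ≫ w) w' := by
  have := h.epi
  have := hpo.epi_inr_of_epi
  obtain ⟨Z₀, g₀, h₀⟩ := E.infl_comp v w ⟨_, _, h⟩ hw
  obtain ⟨e, he⟩ := h₀.desc w'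
    (by rw [Category.assoc, ← hpo.w, reassoc_of% E.comp_zero h, Limits.zero_comp])
  obtain ⟨s, hs⟩ := h.desc (w ≫ g₀) (by rw [← Category.assoc, E.comp_zero h₀])
  exact h₀.of_epi_of_comp_eq he (hpo.inr_desc s g₀ hs)

lemma IsSES.ext_of_comp_eq_zero {B Z U P Y : C} {z : B ⟶ Z} {zc : Z ⟶ U} (h : E.IsSES z zc)
    {p : P ⟶ Z} [Epi (p ≫ zc)] {t : Z ⟶ Y} (hz : z ≫ t = 0) (hp : p ≫ t = 0) : t = 0 := by
  obtain ⟨y, rfl⟩ := h.desc t hz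
  have hy : (p ≫ zc) ≫ y = (p ≫ zc) ≫ 0 := by rw [Category.assoc, hp, Limits.comp_zero]
  rw [cancel_epi] at hy
  rw [hy, Limits.comp_zero]

lemma IsSES.exists_extension_of_morphism {B Z U Ω P T : C} {z : B ⟶ Z} {zc : Z ⟶ U}
    (h : E.IsSES z zc) {q : Ω ⟶ P} {pU : P ⟶ U} (hq : E.IsSES q pU) {x : Ω ⟶ B} {p : P ⟶ Z}
    (hc1 : q ≫ p = x ≫ z) (hc2 : p ≫ zc = pU) {β : B ⟶ T} {μ : P ⟶ T} (hμ : q ≫ μ = x ≫ β) :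
    ∃ γ : Z ⟶ T, z ≫ γ = β := by
  have : Epi (p ≫ zc) := hc2 ▸ hq.epi
  obtain ⟨R, i, z', hpo, Cc, c, hi⟩ := E.pushout_infl z β ⟨_, _, h⟩
  have := hi.mono
  -- `p ≫ z'` and `μ ≫ i` agree on `Ω`, so their difference comes from `U`; correcting `z'` by it
  -- gives a map `Z ⟶ R` that lands in `T` on both `z` and `p`, hence factors through `i`.
  obtain ⟨σ, hσ⟩ := hq.desc (p ≫ z' - μ ≫ i) (by
    rw [Preadditive.comp_sub, reassoc_of% hc1, reassoc_of% hμ, ← hpo.w, sub_self])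
  have hz : z ≫ (z' - zc ≫ σ) = β ≫ i := by
    rw [Preadditive.comp_sub, reassoc_of% E.comp_zero h, Limits.zero_comp, sub_zero, hpo.w]
  have hp : p ≫ (z' - zc ≫ σ) = μ ≫ i := by
    rw [Preadditive.comp_sub, reassoc_of% hc2, hσ, sub_sub_cancel]
  obtain ⟨γ, hγ⟩ := hi.lift (z' - zc ≫ σ) (h.ext_of_comp_eq_zero (p := p)
    (by rw [reassoc_of% hz, E.comp_zero hi, Limits.comp_zero])
    (by rw [reassoc_of% hp, E.comp_zero hi, Limits.comp_zero]))
  exact ⟨γ, by rw [← cancel_mono i, Category.assoc, hγ, hz]⟩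

end ExactStructure

namespace CotorsionPair

variable {E : ExactStructure C} (CP : CotorsionPair E)

lemma exists_lift_of_mem_U {V₀ W₀ Y U' : C} {i : V₀ ⟶ W₀} {pr : W₀ ⟶ Y}
    (hses : E.IsSES i pr) (hV : V₀ ∈ CP.V) (hU' : U' ∈ CP.U) (h : U' ⟶ Y) :
    ∃ l : U' ⟶ W₀, l ≫ pr = h := by
  obtain ⟨PB, g', bb, hpb, K, kk, hk⟩ := E.pullback_defl pr h ⟨_, _, hses⟩
  obtain ⟨j, hj1, hj2⟩ := hpb.exists_lift 0 i (by rw [Limits.zero_comp, E.comp_zero hses])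
  obtain ⟨e, he⟩ := hk.lift j hj1
  obtain ⟨e', he'⟩ := hses.lift (kk ≫ bb)
    (by rw [Category.assoc, ← hpb.w, reassoc_of% E.comp_zero hk, Limits.zero_comp])
  have := hk.mono
  have hee : e' ≫ e = 𝟙 K := by
    rw [← cancel_mono kk, Category.assoc, he, Category.id_comp]
    apply hpb.hom_ext
    · rw [Category.assoc, hj1, Limits.comp_zero, E.comp_zero hk]
    · rw [Category.assoc, hj2, he']
  -- `K` is a retract of `V₀`, so the pulled-back conflation `K ↣ PB ↠ U'` splits.
  obtain ⟨r, hr⟩ := CP.ext_vanish hk hU' (CP.V_summand hV ⟨e', e, hee⟩)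
  obtain ⟨s, hs⟩ := hk.desc (𝟙 PB - r ≫ kk)
    (by rw [Preadditive.comp_sub, Category.comp_id, reassoc_of% hr, sub_self])
  have := hk.epi
  have hsg : s ≫ g' = 𝟙 U' := by
    rw [← cancel_epi g', reassoc_of% hs, Preadditive.sub_comp, Category.id_comp,
      Category.assoc, E.comp_zero hk, Limits.comp_zero, sub_zero, Category.comp_id]
  exact ⟨s ≫ bb, by rw [Category.assoc, ← hpb.w, reassoc_of% hsg]⟩

lemma exists_extension_of_mem_V {A M X V' : C} {f : A ⟶ M} {g : M ⟶ X}
    (hses : E.IsSES f g) (hX : X ∈ CP.U) (hV' : V' ∈ CP.V) (h : A ⟶ V') :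
    ∃ l : M ⟶ V', f ≫ l = h := by
  obtain ⟨PO, f', bb, hpo, Cc, c, hc⟩ := E.pushout_infl f h ⟨_, _, hses⟩
  obtain ⟨d, hd1, hd2⟩ := hpo.exists_desc 0 g (by rw [Limits.comp_zero, E.comp_zero hses])
  obtain ⟨w, hw⟩ := hc.desc d hd1
  obtain ⟨w', hw'⟩ := hses.desc (bb ≫ c)
    (by rw [← Category.assoc, ← hpo.w, Category.assoc, E.comp_zero hc, Limits.comp_zero])
  have := hc.epi
  have hww : w ≫ w' = 𝟙 Cc := by
    rw [← cancel_epi c, ← Category.assoc, hw, Category.comp_id]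
    apply hpo.hom_ext
    · rw [← Category.assoc, hd1, Limits.zero_comp, E.comp_zero hc]
    · rw [← Category.assoc, hd2, hw']
  -- `Cc` is a retract of `X`, so the pushed-out conflation `V' ↣ PO ↠ Cc` splits.
  obtain ⟨r, hr⟩ := CP.ext_vanish hc (CP.U_summand hX ⟨w, w', hww⟩) hV'
  exact ⟨bb ≫ r, by rw [← Category.assoc, ← hpo.w, Category.assoc, hr, Category.comp_id]⟩

lemma factorsThru_W_of_comp_eq_zero {B Z U Y : C} {z : B ⟶ Z} {zc : Z ⟶ U}
    (h : E.IsSES z zc) (hU : U ∈ CP.U) (hY : Y ∈ CP.Bplus) {t : Z ⟶ Y} (ht : z ≫ t = 0) :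
    FactorsThru CP.W t := by
  obtain ⟨V₀, W₀, i₀, p₀, hV₀, hW₀, hses₀⟩ := hY
  obtain ⟨s, rfl⟩ := h.desc t ht
  obtain ⟨l, rfl⟩ := CP.exists_lift_of_mem_U hses₀ hV₀ hU s
  exact ⟨W₀, zc ≫ l, p₀, hW₀, Category.assoc _ _ _⟩

lemma nonempty_iso_of_extensions {B Z Z' U U' : C} {z : B ⟶ Z} {zc : Z ⟶ U} {z' : B ⟶ Z'}
    {zc' : Z' ⟶ U'} (h : E.IsSES z zc) (h' : E.IsSES z' zc') (hU : U ∈ CP.U)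
    (hU' : U' ∈ CP.U) (hZ : Z ∈ CP.Bplus) (hZ' : Z' ∈ CP.Bplus) {f : Z ⟶ Z'} {g : Z' ⟶ Z}
    (hf : z ≫ f = z') (hg : z' ≫ g = z) : Nonempty (CP.qf.obj Z ≅ CP.qf.obj Z') := by
  have hfg : CP.wRel (f ≫ g) (𝟙 Z) := CP.factorsThru_W_of_comp_eq_zero h hU hZ
    (by rw [Preadditive.comp_sub, reassoc_of% hf, hg, Category.comp_id, sub_self])
  have hgf : CP.wRel (g ≫ f) (𝟙 Z') := CP.factorsThru_W_of_comp_eq_zero h' hU' hZ'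
    (by rw [Preadditive.comp_sub, reassoc_of% hg, hf, Category.comp_id, sub_self])
  exact ⟨⟨CP.qf.map f, CP.qf.map g,
    by rw [← Functor.map_comp, CategoryTheory.Quotient.sound _ hfg, CategoryTheory.Functor.map_id],
    by rw [← Functor.map_comp, CategoryTheory.Quotient.sound _ hgf, CategoryTheory.Functor.map_id]⟩⟩

lemma exists_extension_of_mem_Bplus {U B W X P Y : C} {u : U ⟶ B} {w : U ⟶ W} {wc : W ⟶ X}
    {α : B ⟶ P} {w' : W ⟶ P} (hU : U ∈ CP.U) (hX : X ∈ CP.U) (hw : E.IsSES w wc)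
    (hpo : IsPushout u w α w') (hY : Y ∈ CP.Bplus) (t : B ⟶ Y) : ∃ s : P ⟶ Y, α ≫ s = t := by
  obtain ⟨V₀, W₀, i₀, p₀, hV₀, hW₀, hses₀⟩ := hY
  obtain ⟨l, hl⟩ := CP.exists_lift_of_mem_U hses₀ hV₀ hU (u ≫ t)
  obtain ⟨m, hm⟩ := CP.exists_extension_of_mem_V hw hX hW₀.2 l
  exact ⟨hpo.desc t (m ≫ p₀) (by rw [reassoc_of% hm, hl]), hpo.inl_desc _ _ _⟩

lemma exists_comp_eq_of_factorsThru_U {Ω P U B Y V₀ W₀ : C} {q : Ω ⟶ P} {pU : P ⟶ U}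
    (hq : E.IsSES q pU) (hU : U ∈ CP.U) {x : Ω ⟶ B} (hx : FactorsThru CP.U x)
    {i₀ : V₀ ⟶ W₀} {p₀ : W₀ ⟶ Y} (hY : E.IsSES i₀ p₀) (hV₀ : V₀ ∈ CP.V) (hW₀ : W₀ ∈ CP.V)
    (β : B ⟶ Y) : ∃ μ : P ⟶ Y, q ≫ μ = x ≫ β := by
  obtain ⟨U', a, b, hU', rfl⟩ := hx
  obtain ⟨l, hl⟩ := CP.exists_lift_of_mem_U hY hV₀ hU' (b ≫ β)
  obtain ⟨m, hm⟩ := CP.exists_extension_of_mem_V hq hU hW₀ (a ≫ l)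
  exact ⟨m ≫ p₀, by rw [reassoc_of% hm, hl, Category.assoc]⟩

end CotorsionPair

theorem stmt6_general (E : ExactStructure C) (CP : CotorsionPair E)
    {B Z U : C} (z : B ⟶ Z) (zc : Z ⟶ U) (hU : U ∈ CP.U) (hZ : Z ∈ CP.Bplus)
    (hses : E.IsSES z zc)
    {ΩU P : C} (q : ΩU ⟶ P) (pU : P ⟶ U) (hsesq : E.IsSES q pU)
    (x : ΩU ⟶ B) (p : P ⟶ Z) (hc1 : q ≫ p = x ≫ z) (hc2 : p ≫ zc = pU)
    (hx : FactorsThru CP.U x)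
    {VB UB W0B U0B Bp : C} {vB : VB ⟶ UB} {uB : UB ⟶ B} {wB' : UB ⟶ W0B}
    {w0B : W0B ⟶ U0B} {αB : B ⟶ Bp} {wB : W0B ⟶ Bp} {pB : Bp ⟶ U0B}
    (hVB : VB ∈ CP.V) (hUB : UB ∈ CP.U) (hW0B : W0B ∈ CP.W) (hU0B : U0B ∈ CP.U)
    (h1B : E.IsSES vB uB) (h2B : E.IsSES wB' w0B)
    (hpoB : IsPushout uB wB' αB wB) (h3B : E.IsSES αB pB)
    :
    Nonempty (CP.qf.obj Z ≅ CP.qf.obj Bp) := by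
  have hsesBp : E.IsSES (vB ≫ wB') wB := E.isSES_comp_of_isPushout h1B ⟨_, _, h2B⟩ hpoB
  have hBp : Bp ∈ CP.Bplus := ⟨VB, W0B, _, _, hVB, hW0B, hsesBp⟩
  obtain ⟨g, hg⟩ := CP.exists_extension_of_mem_Bplus hUB hU0B h2B hpoB hZ z
  obtain ⟨μ, hμ⟩ := CP.exists_comp_eq_of_factorsThru_U hsesq hU hx hsesBp hVB hW0B.2 αB
  obtain ⟨f, hf⟩ := hses.exists_extension_of_morphism hsesq hc1 hc2 hμ
  exact CP.nonempty_iso_of_extensions hses h3B hU hU0B hZ hBp hf hg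

/-- for any reflection sequence `B ↣ Z ↠ U` for `B`, one has `Z ≅ B⁺`
in the quotient category `𝓑/𝒲`, where `B⁺` is the canonical construction. -/
theorem stmt6 (E : ExactStructure C) (CP : CotorsionPair E)
    (hEP : E.EnoughProj) (hEI : E.EnoughInj)
    {B Z U : C} (z : B ⟶ Z) (zc : Z ⟶ U) (hU : U ∈ CP.U) (hZ : Z ∈ CP.Bplus)
    (hses : E.IsSES z zc)
    {ΩU P : C} (q : ΩU ⟶ P) (pU : P ⟶ U) (hproj : E.Proj P) (hsesq : E.IsSES q pU)
    (x : ΩU ⟶ B) (p : P ⟶ Z) (hc1 : q ≫ p = x ≫ z) (hc2 : p ≫ zc = pU)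
    (hx : FactorsThru CP.U x)
    {VB UB W0B U0B Bp : C} {vB : VB ⟶ UB} {uB : UB ⟶ B} {wB' : UB ⟶ W0B}
    {w0B : W0B ⟶ U0B} {αB : B ⟶ Bp} {wB : W0B ⟶ Bp} {pB : Bp ⟶ U0B}
    (hVB : VB ∈ CP.V) (hUB : UB ∈ CP.U) (hW0B : W0B ∈ CP.W) (hU0B : U0B ∈ CP.U)
    (h1B : E.IsSES vB uB) (h2B : E.IsSES wB' w0B)
    (hpoB : IsPushout uB wB' αB wB) (h3B : E.IsSES αB pB)
    :
    Nonempty (CP.qf.obj Z ≅ CP.qf.obj Bp) :=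
  stmt6_general E CP z zc hU hZ hses q pU hsesq x p hc1 hc2 hx hVB hUB hW0B hU0B h1B h2B hpoB h3B
end

section
/- Let (𝒰,𝒱) be a cotorsion pair on an exact category 𝓑 with enough projectives and injectives. The short exact sequence B ↣ B⁺ ↠ U⁰ from the canonical construction of B⁺ is a reflection sequence for B: there is a commutative diagram from a projective presentation ΩU⁰ ↣ P ↠ U⁰ to B ↣ B⁺ ↠ U⁰ in which the induced map ΩU⁰ → B factors through an object of 𝒰. -/
open CategoryTheory Limits ZeroObject

universe v u

variable (C : Type u) [Category.{v} C] [Preadditive C] [HasZeroObject C]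
  [HasBinaryBiproducts C]

variable {C}

/-!
Lift a projective presentation `ΩU⁰ ↣ P ↠ U⁰` along the deflation `W⁰ ↠ U⁰`; the induced map
`ΩU⁰ → U_B`, followed by `U_B ↠ B`, is the required map `ΩU⁰ → B`, and it factors through
`U_B ∈ 𝒰`. The square commutes because `B⁺` is the push-out of `W⁰` along `U_B ↠ B`. The
deflation `B⁺ ↠ U⁰` of the statement need not be the one induced by the push-out, but both are
cokernels of `B ↣ B⁺`, so they differ by an automorphism of `U⁰`, which is absorbed into the
presentation.
-/

namespace ExactStructure

variable {E : ExactStructure C}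

lemma IsSES.comp_iso {A B X X' : C} {f : A ⟶ B} {g : B ⟶ X} (h : E.IsSES f g) (e : X ≅ X') :
    E.IsSES f (g ≫ e.hom) := by
  simpa using E.ses_iso_congr (Iso.refl A) (Iso.refl B) e h

lemma IsSES.exists_iso_of_isPushout {A B X A' B' X' : C} {f : A ⟶ B} {g : B ⟶ X}
    {a : A ⟶ A'} {f' : A' ⟶ B'} {b : B ⟶ B'} {g' : B' ⟶ X'}
    (h : E.IsSES f g) (h' : E.IsSES f' g') (hpo : IsPushout a f f' b) :
    ∃ e : X ≅ X', g ≫ e.hom = b ≫ g' := by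
  obtain ⟨hg⟩ := E.isCokernel h
  obtain ⟨hg'⟩ := E.isCokernel h'
  obtain ⟨s, hs : g ≫ s = b ≫ g'⟩ := CokernelCofork.IsColimit.desc' hg (b ≫ g')
    (by rw [← hpo.w_assoc, E.comp_zero h', Limits.comp_zero])
  let c : B' ⟶ X := hpo.desc 0 g (by rw [Limits.comp_zero, E.comp_zero h])
  obtain ⟨s', hs' : g' ≫ s' = c⟩ := CokernelCofork.IsColimit.desc' hg' c (hpo.inl_desc _ _ _)
  have hcs : c ≫ s = g' := by
    apply hpo.hom_ext
    · rw [hpo.inl_desc_assoc, zero_comp, E.comp_zero h']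
    · rw [hpo.inr_desc_assoc, hs]
  refine ⟨⟨s, s', ?_, ?_⟩, hs⟩
  · apply Cofork.IsColimit.hom_ext hg
    change g ≫ s ≫ s' = g ≫ 𝟙 X
    rw [reassoc_of% hs, hs', hpo.inr_desc, Category.comp_id]
  · apply Cofork.IsColimit.hom_ext hg'
    change g' ≫ s' ≫ s = g' ≫ 𝟙 X'
    rw [reassoc_of% hs', hcs, Category.comp_id]

lemma Proj.exists_lift_of_isSES {K P A B X : C} {q : K ⟶ P} {π : P ⟶ X}
    {f : A ⟶ B} {g : B ⟶ X} (hP : E.Proj P) (hqπ : q ≫ π = 0) (h : E.IsSES f g) :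
    ∃ (t : P ⟶ B) (y : K ⟶ A), t ≫ g = π ∧ q ≫ t = y ≫ f := by
  obtain ⟨t, ht⟩ := hP g ⟨A, f, h⟩ π
  obtain ⟨hf⟩ := E.isKernel h
  obtain ⟨y, hy⟩ := KernelFork.IsLimit.lift' hf (q ≫ t) (by rw [Category.assoc, ht, hqπ])
  exact ⟨t, y, ht, hy.symm⟩

end ExactStructure

theorem stmt7_general (E : ExactStructure C) (CP : CotorsionPair E)
    (hEP : E.EnoughProj)
    {B : C}
    {UB W0B U0B Bp : C} {uB : UB ⟶ B} {wB' : UB ⟶ W0B}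
    {w0B : W0B ⟶ U0B} {αB : B ⟶ Bp} {wB : W0B ⟶ Bp} {pB : Bp ⟶ U0B}
    (hUB : UB ∈ CP.U)
    (h2B : E.IsSES wB' w0B)
    (hpoB : IsPushout uB wB' αB wB) (h3B : E.IsSES αB pB)
    :
    ∃ (ΩU P : C) (q : ΩU ⟶ P) (pU : P ⟶ U0B) (x : ΩU ⟶ B) (p : P ⟶ Bp),
      E.Proj P ∧ E.IsSES q pU ∧ q ≫ p = x ≫ αB ∧ p ≫ pB = pU ∧
      FactorsThru CP.U x := by
  obtain ⟨P, ΩU, q, π, hP, hqπ⟩ := hEP U0B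
  obtain ⟨t, y, ht, hy⟩ := hP.exists_lift_of_isSES (E.comp_zero hqπ) h2B
  obtain ⟨e, he⟩ := h2B.exists_iso_of_isPushout h3B hpoB
  refine ⟨ΩU, P, q, π ≫ e.hom, y ≫ uB, t ≫ wB, hP, hqπ.comp_iso e, ?_, ?_,
    ⟨UB, y, uB, hUB, rfl⟩⟩
  · rw [reassoc_of% hy, ← hpoB.w, Category.assoc]
  · rw [Category.assoc, ← he, reassoc_of% ht]

/-- the canonical short exact sequence `B ↣ B⁺ ↠ U⁰` is a reflection
sequence for `B`: there is a commutative diagram from a projective presentation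
`ΩU⁰ ↣ P ↠ U⁰` to it whose left vertical map factors through `𝒰`. -/
theorem stmt7 (E : ExactStructure C) (CP : CotorsionPair E)
    (hEP : E.EnoughProj) (hEI : E.EnoughInj)
    {B : C}
    {VB UB W0B U0B Bp : C} {vB : VB ⟶ UB} {uB : UB ⟶ B} {wB' : UB ⟶ W0B}
    {w0B : W0B ⟶ U0B} {αB : B ⟶ Bp} {wB : W0B ⟶ Bp} {pB : Bp ⟶ U0B}
    (hVB : VB ∈ CP.V) (hUB : UB ∈ CP.U) (hW0B : W0B ∈ CP.W) (hU0B : U0B ∈ CP.U)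
    (h1B : E.IsSES vB uB) (h2B : E.IsSES wB' w0B)
    (hpoB : IsPushout uB wB' αB wB) (h3B : E.IsSES αB pB)
    :
    ∃ (ΩU P : C) (q : ΩU ⟶ P) (pU : P ⟶ U0B) (x : ΩU ⟶ B) (p : P ⟶ Bp),
      E.Proj P ∧ E.IsSES q pU ∧ q ≫ p = x ≫ αB ∧ p ≫ pB = pU ∧
      FactorsThru CP.U x :=
  stmt7_general E CP hEP hUB h2B hpoB h3B
end

section
/- Let (𝒰,𝒱) be a cotorsion pair on an exact category 𝓑 with enough projectives and injectives, with associated half exact functor H. If 𝒰 ⊆ 𝒱, then H(B) = 0 if and only if B ∈ 𝒱; if 𝒱 ⊆ 𝒰, then H(B) = 0 if and only if B ∈ 𝒰. -/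
open CategoryTheory Limits ZeroObject

universe v u

variable (C : Type u) [Category.{v} C] [Preadditive C] [HasZeroObject C]
  [HasBinaryBiproducts C]

variable {C}

/-!
If `𝒰 ⊆ 𝒱`, every object lies in `𝓑⁺`, because the middle term of its `𝒰`-approximation
`V ↣ U ↠ B` lies in `𝒲`. Hence `H(B) ≅ σ⁻(B)` and, by adjunction, `H(B) = 0` iff every map
`A → B` with `A ∈ 𝓑⁻` factors through `𝒲`. If `B ∈ 𝒱` this holds because `Ext¹(𝒰, 𝒱) = 0`
extends such a map along the inflation `A ↣ W`. Conversely, pulling a `𝒰`-approximation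
`V₁ ↣ U₁ ↠ V^B` back along `B ↣ V^B` yields `V₁ ↣ K ↠ B` with `K ∈ 𝓑⁻`; once `K ↠ B` factors
through `𝒲`, `K` is a summand of an object of `𝒱`, so `K ↣ U₁ ↠ U^B` splits and `B` is a
summand of `V^B`. The case `𝒱 ⊆ 𝒰` is dual.
-/

namespace CategoryTheory

variable {D D' : Type*} [Category D] [Category D']

lemma isZero_iff_forall_subsingleton_hom_to [HasZeroMorphisms D] (X : D) :
    IsZero X ↔ ∀ Y, Subsingleton (Y ⟶ X) :=
  ⟨fun h _ => ⟨h.eq_of_tgt⟩, fun h => (IsZero.iff_id_eq_zero X).2 ((h X).elim _ _)⟩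

lemma isZero_iff_forall_subsingleton_hom_from [HasZeroMorphisms D] (X : D) :
    IsZero X ↔ ∀ Y, Subsingleton (X ⟶ Y) :=
  ⟨fun h _ => ⟨h.eq_of_src⟩, fun h => (IsZero.iff_id_eq_zero X).2 ((h X).elim _ _)⟩

lemma Adjunction.isZero_obj_right_iff [HasZeroMorphisms D'] {L : D' ⥤ D} {R : D ⥤ D'}
    (adj : L ⊣ R) (Y : D) : IsZero (R.obj Y) ↔ ∀ X, Subsingleton (L.obj X ⟶ Y) := by
  rw [isZero_iff_forall_subsingleton_hom_to]
  exact forall_congr' fun X => (adj.homEquiv X Y).subsingleton_congr.symm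

lemma Adjunction.isZero_obj_left_iff [HasZeroMorphisms D] {L : D' ⥤ D} {R : D ⥤ D'}
    (adj : L ⊣ R) (X : D') : IsZero (L.obj X) ↔ ∀ Y, Subsingleton (X ⟶ R.obj Y) := by
  rw [isZero_iff_forall_subsingleton_hom_from]
  exact forall_congr' fun Y => (adj.homEquiv X Y).subsingleton_congr

lemma ObjectProperty.isZero_ι_obj_iff [HasZeroMorphisms D] {P : ObjectProperty D}
    (X : P.FullSubcategory) : IsZero (P.ι.obj X) ↔ IsZero X := by
  refine ⟨IsZero.of_full_of_faithful_of_isZero P.ι X, fun h => ?_⟩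
  rw [IsZero.iff_id_eq_zero] at h ⊢
  simpa using congr_arg P.ι.map h

end CategoryTheory

namespace ExactStructure

variable {𝒜 : Type*} [Category 𝒜] [Preadditive 𝒜] [HasZeroObject 𝒜] {E : ExactStructure 𝒜}
  {A B X : 𝒜} {f : A ⟶ B} {g : B ⟶ X}

lemma epi_of_isSES (h : E.IsSES f g) : Epi g := by
  obtain ⟨hc⟩ := E.isCokernel h
  exact ⟨fun u v w => Cofork.IsColimit.hom_ext hc (by simpa using w)⟩

lemma mono_of_isSES (h : E.IsSES f g) : Mono f := by
  obtain ⟨hl⟩ := E.isKernel h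
  exact ⟨fun u v w => Fork.IsLimit.hom_ext hl (by simpa using w)⟩

lemma exists_desc_of_isSES (h : E.IsSES f g) {Y : 𝒜} (k : B ⟶ Y) (hk : f ≫ k = 0) :
    ∃ l : X ⟶ Y, g ≫ l = k := by
  obtain ⟨hc⟩ := E.isCokernel h
  obtain ⟨l, hl⟩ := CokernelCofork.IsColimit.desc' hc k hk
  exact ⟨l, by simpa using hl⟩

lemma exists_lift_of_isSES (h : E.IsSES f g) {Y : 𝒜} (k : Y ⟶ B) (hk : k ≫ g = 0) :
    ∃ l : Y ⟶ A, l ≫ f = k := by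
  obtain ⟨hl⟩ := E.isKernel h
  obtain ⟨l, hl'⟩ := KernelFork.IsLimit.lift' hl k hk
  exact ⟨l, by simpa using hl'⟩

lemma exists_section_of_retraction (h : E.IsSES f g) {r : B ⟶ A} (hr : f ≫ r = 𝟙 A) :
    ∃ s : X ⟶ B, s ≫ g = 𝟙 X := by
  obtain ⟨s, hs⟩ := exists_desc_of_isSES h (𝟙 B - r ≫ f) (by simp [reassoc_of% hr])
  have := epi_of_isSES h
  exact ⟨s, by rw [← cancel_epi g, reassoc_of% hs]; simp [E.comp_zero h]⟩

lemma exists_retraction_of_section (h : E.IsSES f g) {s : X ⟶ B} (hs : s ≫ g = 𝟙 X) :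
    ∃ r : B ⟶ A, f ≫ r = 𝟙 A := by
  obtain ⟨r, hr⟩ := exists_lift_of_isSES h (𝟙 B - g ≫ s) (by simp [hs])
  have := mono_of_isSES h
  exact ⟨r, by rw [← cancel_mono f, Category.assoc, hr]; simp [reassoc_of% (E.comp_zero h)]⟩

lemma nonempty_iso_of_isPushout {A' P Z : 𝒜} {a : A ⟶ A'} {f' : A' ⟶ P} {b : B ⟶ P}
    {g' : P ⟶ Z} (hs : E.IsSES f g) (hpo : IsPushout a f f' b) (hs' : E.IsSES f' g') :
    Nonempty (Z ≅ X) := by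
  obtain ⟨u, hu⟩ := exists_desc_of_isSES hs (b ≫ g') (by
    rw [← Category.assoc, ← hpo.w, Category.assoc, E.comp_zero hs', Limits.comp_zero])
  let w : P ⟶ X := hpo.desc 0 g (by rw [Limits.comp_zero, E.comp_zero hs])
  obtain ⟨v, hv⟩ := exists_desc_of_isSES hs' w (hpo.inl_desc _ _ _)
  have := epi_of_isSES hs
  have := epi_of_isSES hs'
  have hwu : w ≫ u = g' := hpo.hom_ext (by simp [w, E.comp_zero hs']) (by simp [w, hu])
  refine ⟨⟨v, u, ?_, ?_⟩⟩
  · rw [← cancel_epi g', reassoc_of% hv, hwu, Category.comp_id]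
  · rw [← cancel_epi g, reassoc_of% hu, hv, hpo.inr_desc, Category.comp_id]

lemma nonempty_iso_of_isPullback {X' P Z : 𝒜} {g' : P ⟶ X'} {b : P ⟶ B} {x : X' ⟶ X}
    {f' : Z ⟶ P} (hs : E.IsSES f g) (hpb : IsPullback g' b x g) (hs' : E.IsSES f' g') :
    Nonempty (Z ≅ A) := by
  obtain ⟨u, hu⟩ := exists_lift_of_isSES hs (f' ≫ b) (by
    rw [Category.assoc, ← hpb.w, ← Category.assoc, E.comp_zero hs', Limits.zero_comp])
  let w : A ⟶ P := hpb.lift 0 f (by rw [Limits.zero_comp, E.comp_zero hs])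
  obtain ⟨v, hv⟩ := exists_lift_of_isSES hs' w (hpb.lift_fst _ _ _)
  have := mono_of_isSES hs
  have := mono_of_isSES hs'
  have huw : u ≫ w = f' := hpb.hom_ext (by simp [w, E.comp_zero hs']) (by simp [w, hu])
  refine ⟨⟨u, v, ?_, ?_⟩⟩
  · rw [← cancel_mono f', Category.assoc, hv, huw, Category.id_comp]
  · rw [← cancel_mono f, Category.assoc, hu, ← Category.assoc, hv, hpb.lift_snd,
      Category.id_comp]

/-- `q ≫ g` is a deflation by `defl_comp`, and its kernel is identified with the pullback `K`. -/
lemma isSES_of_isPullback {U V K : 𝒜} {j : V ⟶ U} {q : U ⟶ B} {π : K ⟶ A} {c : K ⟶ U}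
    (hfg : E.IsSES f g) (hjq : E.IsSES j q) (hpb : IsPullback π c f q) :
    E.IsSES c (q ≫ g) := by
  obtain ⟨Z, k, hZ⟩ := E.defl_comp q g ⟨V, j, hjq⟩ ⟨A, f, hfg⟩
  obtain ⟨t, ht⟩ := exists_lift_of_isSES hfg (k ≫ q) (by rw [Category.assoc, E.comp_zero hZ])
  let φ : Z ⟶ K := hpb.lift t k ht
  obtain ⟨ψ, hψ⟩ := exists_lift_of_isSES hZ c (by
    rw [← Category.assoc, ← hpb.w, Category.assoc, E.comp_zero hfg, Limits.comp_zero])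
  have := mono_of_isSES hZ
  have := mono_of_isSES hfg
  have hφψ : φ ≫ ψ = 𝟙 Z := by rw [← cancel_mono k, Category.assoc, hψ]; simp [φ]
  have hψφ : ψ ≫ φ = 𝟙 K := hpb.hom_ext
    (by rw [← cancel_mono f]; simp [φ, ht, reassoc_of% hψ, hpb.w])
    (by simp [φ, hψ])
  simpa [hψ] using E.ses_iso_congr ⟨ψ, φ, hψφ, hφψ⟩ (Iso.refl U) (Iso.refl X) hZ

lemma isSES_of_isPushout {U V K : 𝒜} {q : B ⟶ V} {p : V ⟶ U} {f' : X ⟶ K} {b : V ⟶ K}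
    (hfg : E.IsSES f g) (hqp : E.IsSES q p) (hpo : IsPushout g q f' b) :
    E.IsSES (f ≫ q) b := by
  obtain ⟨Z, k, hZ⟩ := E.infl_comp f q ⟨X, g, hfg⟩ ⟨U, p, hqp⟩
  obtain ⟨t, ht⟩ := exists_desc_of_isSES hfg (q ≫ k) (by rw [← Category.assoc, E.comp_zero hZ])
  let φ : K ⟶ Z := hpo.desc t k ht
  obtain ⟨ψ, hψ⟩ := exists_desc_of_isSES hZ b (by
    rw [Category.assoc, ← hpo.w, ← Category.assoc, E.comp_zero hfg, Limits.zero_comp])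
  have := epi_of_isSES hZ
  have := epi_of_isSES hfg
  have hψφ : ψ ≫ φ = 𝟙 Z := by rw [← cancel_epi k, reassoc_of% hψ]; simp [φ]
  have hφψ : φ ≫ ψ = 𝟙 K := hpo.hom_ext
    (by rw [← cancel_epi g]; simp [φ, reassoc_of% ht, hψ, hpo.w])
    (by simp [φ, hψ])
  simpa [hψ] using E.ses_iso_congr (Iso.refl A) (Iso.refl V) ⟨ψ, φ, hψφ, hφψ⟩ hZ

end ExactStructure

section FactorsThru

variable {𝒜 : Type*} [Category 𝒜] {S : Set 𝒜} {X Y Z : 𝒜}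

lemma FactorsThru.comp_left {g : Y ⟶ Z} (h : FactorsThru S g) (f : X ⟶ Y) :
    FactorsThru S (f ≫ g) := by
  obtain ⟨W, a, b, hW, rfl⟩ := h
  exact ⟨W, f ≫ a, b, hW, Category.assoc _ _ _⟩

lemma FactorsThru.comp_right {f : X ⟶ Y} (h : FactorsThru S f) (g : Y ⟶ Z) :
    FactorsThru S (f ≫ g) := by
  obtain ⟨W, a, b, hW, rfl⟩ := h
  exact ⟨W, a, b ≫ g, hW, (Category.assoc _ _ _).symm⟩

lemma FactorsThru.neg [Preadditive 𝒜] {f : X ⟶ Y} (h : FactorsThru S f) :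
    FactorsThru S (-f) := by
  obtain ⟨W, a, b, hW, rfl⟩ := h
  exact ⟨W, a, -b, hW, Preadditive.comp_neg _ _⟩

lemma FactorsThru.add [Preadditive 𝒜] [HasBinaryBiproducts 𝒜]
    (hS : ∀ ⦃W W' : 𝒜⦄, W ∈ S → W' ∈ S → (W ⊞ W') ∈ S) {f g : X ⟶ Y}
    (hf : FactorsThru S f) (hg : FactorsThru S g) : FactorsThru S (f + g) := by
  obtain ⟨W, a, b, hW, rfl⟩ := hf
  obtain ⟨W', a', b', hW', rfl⟩ := hg
  exact ⟨W ⊞ W', biprod.lift a a', biprod.desc b b', hS hW hW', biprod.lift_desc⟩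

lemma factorsThru_zero [HasZeroMorphisms 𝒜] {W : 𝒜} (hW : W ∈ S) :
    FactorsThru S (0 : X ⟶ Y) :=
  ⟨W, 0, 0, hW, Limits.zero_comp⟩

end FactorsThru

namespace CotorsionPair

variable {E : ExactStructure C} (CP : CotorsionPair E)

lemma mem_U_of_iso {X Y : C} (e : X ≅ Y) (hY : Y ∈ CP.U) : X ∈ CP.U :=
  CP.U_summand hY ⟨e.hom, e.inv, e.hom_inv_id⟩

lemma mem_V_of_iso {X Y : C} (e : X ≅ Y) (hY : Y ∈ CP.V) : X ∈ CP.V :=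
  CP.V_summand hY ⟨e.hom, e.inv, e.hom_inv_id⟩

lemma zero_mem_W : (0 : C) ∈ CP.W := by
  obtain ⟨V₀, U₀, -, -, hV, hU, -⟩ := CP.res 0
  exact ⟨CP.U_summand hU ⟨0, 0, (isZero_zero C).eq_of_src _ _⟩,
    CP.V_summand hV ⟨0, 0, (isZero_zero C).eq_of_src _ _⟩⟩

lemma biprod_mem_W ⦃X Y : C⦄ (hX : X ∈ CP.W) (hY : Y ∈ CP.W) : (X ⊞ Y) ∈ CP.W :=
  ⟨CP.U_add hX.1 hY.1, CP.V_add hX.2 hY.2⟩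

lemma wRel_iff {X Y : C} {f g : X ⟶ Y} : CP.wRel f g ↔ FactorsThru CP.W (f - g) := Iff.rfl

instance : Congruence CP.wRel where
  equivalence :=
    { refl := fun f => by
        rw [wRel_iff, sub_self]
        exact factorsThru_zero CP.zero_mem_W
      symm := fun h => by
        rw [wRel_iff, ← neg_sub]
        exact (CP.wRel_iff.1 h).neg
      trans := fun h h' => by
        have := (CP.wRel_iff.1 h).add CP.biprod_mem_W (CP.wRel_iff.1 h')
        rwa [sub_add_sub_cancel] at this }
  comp_left := by
    intro _ _ _ f g g' h
    rw [wRel_iff, ← Preadditive.comp_sub]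
    exact (CP.wRel_iff.1 h).comp_left f
  comp_right := by
    intro _ _ _ f f' g h
    rw [wRel_iff, ← Preadditive.sub_comp]
    exact (CP.wRel_iff.1 h).comp_right g

lemma wRel_add ⦃X Y : C⦄ (f₁ f₂ g₁ g₂ : X ⟶ Y) (hf : CP.wRel f₁ f₂) (hg : CP.wRel g₁ g₂) :
    CP.wRel (f₁ + g₁) (f₂ + g₂) := by
  rw [wRel_iff, add_sub_add_comm]
  exact (CP.wRel_iff.1 hf).add CP.biprod_mem_W hg

instance : Preadditive CP.QW := Quotient.preadditive CP.wRel CP.wRel_add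

lemma qf_map_eq_zero_iff {X Y : C} (f : X ⟶ Y) : CP.qf.map f = 0 ↔ FactorsThru CP.W f := by
  change CP.qf.map f = CP.qf.map 0 ↔ _
  rw [Quotient.functor_map_eq_iff, wRel_iff, sub_zero]

lemma subsingleton_qf_hom_iff {X Y : C} :
    Subsingleton (CP.qf.obj X ⟶ CP.qf.obj Y) ↔ ∀ f : X ⟶ Y, FactorsThru CP.W f := by
  refine ⟨fun h f => (CP.qf_map_eq_zero_iff f).1 (Subsingleton.elim _ _), fun h => ⟨?_⟩⟩
  intro φ ψ
  obtain ⟨f, rfl⟩ := CP.qf.map_surjective φ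
  obtain ⟨g, rfl⟩ := CP.qf.map_surjective ψ
  rw [Quotient.functor_map_eq_iff, wRel_iff]
  exact h _

lemma exists_lift_along_deflation {A B X U₀ : C} {f : A ⟶ B} {g : B ⟶ X} (hs : E.IsSES f g)
    (hA : A ∈ CP.V) (hU₀ : U₀ ∈ CP.U) (h : U₀ ⟶ X) : ∃ l : U₀ ⟶ B, l ≫ g = h := by
  obtain ⟨P, g', b, hpb, Z, f', hs'⟩ := E.pullback_defl g h ⟨A, f, hs⟩
  obtain ⟨e⟩ := ExactStructure.nonempty_iso_of_isPullback hs hpb hs'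
  obtain ⟨r, hr⟩ := CP.ext_vanish hs' hU₀ (CP.mem_V_of_iso e hA)
  obtain ⟨s, hsg⟩ := ExactStructure.exists_section_of_retraction hs' hr
  exact ⟨s ≫ b, by rw [Category.assoc, ← hpb.w, reassoc_of% hsg]⟩

lemma exists_extend_along_inflation {A B X V₀ : C} {f : A ⟶ B} {g : B ⟶ X} (hs : E.IsSES f g)
    (hX : X ∈ CP.U) (hV₀ : V₀ ∈ CP.V) (h : A ⟶ V₀) : ∃ l : B ⟶ V₀, f ≫ l = h := by
  obtain ⟨P, f', b, hpo, Z, g', hs'⟩ := E.pushout_infl f h ⟨X, g, hs⟩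
  obtain ⟨e⟩ := ExactStructure.nonempty_iso_of_isPushout hs hpo hs'
  obtain ⟨r, hr⟩ := CP.ext_vanish hs' (CP.mem_U_of_iso e hX) hV₀
  exact ⟨b ≫ r, by rw [← Category.assoc, ← hpo.w, Category.assoc, hr, Category.comp_id]⟩

lemma factorsThru_of_mem_Bminus_of_mem_V {A Y : C} (hA : A ∈ CP.Bminus) (hY : Y ∈ CP.V)
    (f : A ⟶ Y) : FactorsThru CP.W f := by
  obtain ⟨W₀, U₀, i, p, hW, hU, hs⟩ := hA
  obtain ⟨l, hl⟩ := CP.exists_extend_along_inflation hs hU hY f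
  exact ⟨W₀, i, l, hW, hl⟩

lemma factorsThru_of_mem_U_of_mem_Bplus {X A : C} (hX : X ∈ CP.U) (hA : A ∈ CP.Bplus)
    (f : X ⟶ A) : FactorsThru CP.W f := by
  obtain ⟨V₀, W₀, i, p, hV, hW, hs⟩ := hA
  obtain ⟨l, hl⟩ := CP.exists_lift_along_deflation hs hV hX f
  exact ⟨W₀, l, p, hW, hl⟩

/-- Lifting the `𝒲`-part of `π` back along `π` splits `𝟙 K` through `W ⊞ Z`. -/
lemma mem_V_of_isSES_of_factorsThru {Z K Y : C} {f : Z ⟶ K} {π : K ⟶ Y} (hs : E.IsSES f π)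
    (hZ : Z ∈ CP.V) (hπ : FactorsThru CP.W π) : K ∈ CP.V := by
  obtain ⟨W, α, β, hW, hαβ⟩ := hπ
  obtain ⟨t, ht⟩ := CP.exists_lift_along_deflation hs hZ hW.1 β
  obtain ⟨m, hm⟩ := ExactStructure.exists_lift_of_isSES hs (𝟙 K - α ≫ t) (by
    rw [Preadditive.sub_comp, Category.assoc, ht, hαβ, Category.id_comp, sub_self])
  refine CP.V_summand (CP.V_add hW.2 hZ) ⟨biprod.lift α m, biprod.desc t f, ?_⟩
  rw [biprod.lift_desc, hm, add_sub_cancel]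

lemma mem_U_of_isSES_of_factorsThru {Y K Z : C} {f : Y ⟶ K} {g : K ⟶ Z} (hs : E.IsSES f g)
    (hZ : Z ∈ CP.U) (hf : FactorsThru CP.W f) : K ∈ CP.U := by
  obtain ⟨W, α, β, hW, hαβ⟩ := hf
  obtain ⟨t, ht⟩ := CP.exists_extend_along_inflation hs hZ hW.2 α
  obtain ⟨n, hn⟩ := ExactStructure.exists_desc_of_isSES hs (𝟙 K - t ≫ β) (by
    rw [Preadditive.comp_sub, reassoc_of% ht, hαβ, Category.comp_id, sub_self])
  refine CP.U_summand (CP.U_add hW.1 hZ) ⟨biprod.lift t g, biprod.desc β n, ?_⟩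
  rw [biprod.lift_desc, hn, add_sub_cancel]

lemma mem_Bplus_of_U_subset_V (hUV : CP.U ⊆ CP.V) (B : C) : B ∈ CP.Bplus := by
  obtain ⟨V₀, U₀, i, p, hV, hU, hs⟩ := CP.res B
  exact ⟨V₀, U₀, i, p, hV, ⟨hU, hUV hU⟩, hs⟩

lemma mem_Bminus_of_V_subset_U (hVU : CP.V ⊆ CP.U) (B : C) : B ∈ CP.Bminus := by
  obtain ⟨V₀, U₀, i, p, hV, hU, hs⟩ := CP.cores B
  exact ⟨V₀, U₀, i, p, ⟨hVU hV, hV⟩, hU, hs⟩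

lemma mem_V_of_forall_factorsThru (hUV : CP.U ⊆ CP.V) {B : C}
    (hB : ∀ A ∈ CP.Bminus, ∀ f : A ⟶ B, FactorsThru CP.W f) : B ∈ CP.V := by
  obtain ⟨VB, UB, i, p, hVB, hUB, hip⟩ := CP.cores B
  obtain ⟨V₁, U₁, j, q, hV₁, hU₁, hjq⟩ := CP.res VB
  obtain ⟨K, π, c, hpb, Z, f, hfπ⟩ := E.pullback_defl q i ⟨V₁, j, hjq⟩
  obtain ⟨e⟩ := ExactStructure.nonempty_iso_of_isPullback hjq hpb hfπ
  have hc : E.IsSES c (q ≫ p) := ExactStructure.isSES_of_isPullback hip hjq hpb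
  have hK : K ∈ CP.Bminus := ⟨U₁, UB, c, q ≫ p, ⟨hU₁, hUV hU₁⟩, hUB, hc⟩
  have hKV : K ∈ CP.V :=
    CP.mem_V_of_isSES_of_factorsThru hfπ (CP.mem_V_of_iso e hV₁) (hB K hK π)
  obtain ⟨r, hr⟩ := CP.ext_vanish hc hUB hKV
  obtain ⟨s, hs⟩ := ExactStructure.exists_section_of_retraction hc hr
  obtain ⟨r', hr'⟩ :=
    ExactStructure.exists_retraction_of_section hip (s := s ≫ q) (by rw [Category.assoc, hs])
  exact CP.V_summand hVB ⟨i, r', hr'⟩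

lemma mem_U_of_forall_factorsThru (hVU : CP.V ⊆ CP.U) {B : C}
    (hB : ∀ A ∈ CP.Bplus, ∀ f : B ⟶ A, FactorsThru CP.W f) : B ∈ CP.U := by
  obtain ⟨VB, UB, j, p, hVB, hUB, hjp⟩ := CP.res B
  obtain ⟨V₁, U₁, q, pV, hV₁, hU₁, hq⟩ := CP.cores UB
  obtain ⟨K, f, b, hpo, Z, g, hfg⟩ := E.pushout_infl q p ⟨U₁, pV, hq⟩
  obtain ⟨e⟩ := ExactStructure.nonempty_iso_of_isPushout hq hpo hfg
  have hb : E.IsSES (j ≫ q) b := ExactStructure.isSES_of_isPushout hjp hq hpo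
  have hK : K ∈ CP.Bplus := ⟨VB, V₁, j ≫ q, b, hVB, ⟨hVU hV₁, hV₁⟩, hb⟩
  have hKU : K ∈ CP.U :=
    CP.mem_U_of_isSES_of_factorsThru hfg (CP.mem_U_of_iso e hU₁) (hB K hK f)
  obtain ⟨r, hr⟩ := CP.ext_vanish hb hKU hVB
  obtain ⟨s, hs⟩ :=
    ExactStructure.exists_section_of_retraction hjp (r := q ≫ r) (by rw [← Category.assoc, hr])
  exact CP.U_summand hUB ⟨s, p, hs⟩

lemma mem_V_iff_forall_subsingleton_hom (hUV : CP.U ⊆ CP.V) (B : C) :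
    B ∈ CP.V ↔ ∀ A : CP.BminusCat, Subsingleton (CP.inclMinus.obj A ⟶ CP.qf.obj B) :=
  ⟨fun hB A => (CP.subsingleton_qf_hom_iff (X := A.obj.as)).2
      (CP.factorsThru_of_mem_Bminus_of_mem_V A.property hB),
    fun h => CP.mem_V_of_forall_factorsThru hUV fun A hA =>
      CP.subsingleton_qf_hom_iff.1 (h ⟨CP.qf.obj A, hA⟩)⟩

lemma mem_U_iff_forall_subsingleton_hom (hVU : CP.V ⊆ CP.U) (B : C) :
    B ∈ CP.U ↔ ∀ A : CP.BplusCat, Subsingleton (CP.qf.obj B ⟶ CP.inclPlus.obj A) :=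
  ⟨fun hB A => (CP.subsingleton_qf_hom_iff (Y := A.obj.as)).2
      (CP.factorsThru_of_mem_U_of_mem_Bplus hB A.property),
    fun h => CP.mem_U_of_forall_factorsThru hVU fun A hA =>
      CP.subsingleton_qf_hom_iff.1 (h ⟨CP.qf.obj A, hA⟩)⟩

end CotorsionPair

theorem stmt13_general (E : ExactStructure C) (CP : CotorsionPair E)
    (σp : CP.QW ⥤ CP.BplusCat) (adj₁ : σp ⊣ CP.inclPlus)
    (σm : CP.QW ⥤ CP.BminusCat) (adj₂ : CP.inclMinus ⊣ σm)
    (H : C ⥤ CP.HeartCat)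
    (hH : H ⋙ CP.inclHeart =
      CP.qf ⋙ σp ⋙ CP.inclPlus ⋙ σm ⋙ CP.inclMinus)
    (B : C) :
    (CP.U ⊆ CP.V → (IsZero (H.obj B) ↔ B ∈ CP.V)) ∧
    (CP.V ⊆ CP.U → (IsZero (H.obj B) ↔ B ∈ CP.U)) := by
  let P : CP.QW := CP.inclPlus.obj (σp.obj (CP.qf.obj B))
  have hHB : IsZero (H.obj B) ↔ IsZero (σm.obj P) := by
    rw [← ObjectProperty.isZero_ι_obj_iff, ← ObjectProperty.isZero_ι_obj_iff (σm.obj P)]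
    exact iff_of_eq (congr_arg IsZero (Functor.congr_obj hH B))
  refine ⟨fun hUV => ?_, fun hVU => ?_⟩
  · -- `B ∈ 𝓑⁺`, so `σ⁺` fixes it
    let e : P ≅ CP.qf.obj B := CP.inclPlus.mapIso
      (asIso (adj₁.counit.app ⟨CP.qf.obj B, CP.mem_Bplus_of_U_subset_V hUV B⟩))
    rw [hHB, adj₂.isZero_obj_right_iff, CP.mem_V_iff_forall_subsingleton_hom hUV]
    exact forall_congr' fun A => ((Iso.refl _).homCongr e).subsingleton_congr
  · -- `P ∈ 𝓑⁻`, so `σ⁻` fixes it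
    have := adj₂.isIso_counit_app_of_iso
      (Y := ⟨P, CP.mem_Bminus_of_V_subset_U hVU P.as⟩) (Iso.refl P)
    let e : CP.inclMinus.obj (σm.obj P) ≅ P := asIso (adj₂.counit.app P)
    rw [hHB, ← ObjectProperty.isZero_ι_obj_iff, e.isZero_iff,
      ObjectProperty.isZero_ι_obj_iff, adj₁.isZero_obj_left_iff,
      CP.mem_U_iff_forall_subsingleton_hom hVU]

/-- if `𝒰 ⊆ 𝒱` then `H(B) = 0 ↔ B ∈ 𝒱`; if `𝒱 ⊆ 𝒰` then
`H(B) = 0 ↔ B ∈ 𝒰`. -/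
theorem stmt13 (E : ExactStructure C) (CP : CotorsionPair E)
    (hEP : E.EnoughProj) (hEI : E.EnoughInj)
    (σp : CP.QW ⥤ CP.BplusCat) (adj₁ : σp ⊣ CP.inclPlus)
    (σm : CP.QW ⥤ CP.BminusCat) (adj₂ : CP.inclMinus ⊣ σm)
    (H : C ⥤ CP.HeartCat)
    (hH : H ⋙ CP.inclHeart =
      CP.qf ⋙ σp ⋙ CP.inclPlus ⋙ σm ⋙ CP.inclMinus)
    [Abelian CP.HeartCat]
    (B : C) :
    (CP.U ⊆ CP.V → (IsZero (H.obj B) ↔ B ∈ CP.V)) ∧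
    (CP.V ⊆ CP.U → (IsZero (H.obj B) ↔ B ∈ CP.U)) :=
  stmt13_general E CP σp adj₁ σm adj₂ H hH B
end
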